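/- Let p : Y ⟶ X, f : X ⟶ A and g : Y ⟶ A be morphisms of simplicial sets with f ∘ p = g. If p is an epimorphism and both p and g are Kan fibrations, then f is a Kan fibration. -/

import Mathlib

universe u

open CategoryTheory Simplicial CategoryTheory.Limits Opposite

/-- A morphism of simplicial sets is a Kan fibration if it has the right lifting property
with respect to all horn inclusions `Λ[n, k] ⟶ Δ[n]` with `n ≥ 1`, `0 ≤ k ≤ n`. -/
def KanFibration {X Y : SSet.{u}} (f : X ⟶ Y) : Prop :=
  ∀ ⦃n : ℕ⦄, 1 ≤ n → ∀ k : Fin (n + 1), HasLiftingProperty (SSet.horn.{u} n k).ι f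

/-!
A Kan fibration `p : Y ⟶ X` that is surjective on vertices lifts every map `u : Λ[n, k] ⟶ X`
with `n ≥ 1`. The horn contracts onto its vertex `k` through the zigzag of homotopies
`id ≤ max (-, k) ≥ const k` of order-preserving self-maps of `Fin (n + 1)`, which preserve the
horn; `u ∘ const k` lifts by surjectivity, and lifts travel along homotopies in both directions
because `A ⊗ Λ[1, i] ⟶ A ⊗ Δ[1]` is an anodyne extension. To solve a lifting problem for `f`,
lift its top edge through `p` and then solve the lifting problem for `g = p ≫ f`.
-/

open MonoidalCategory CartesianMonoidalCategory HomotopicalAlgebra SSet.modelCategoryQuillen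

lemma CategoryTheory.HasLiftingProperty.of_comp_of_forall_exists_lift {C : Type*} [Category C]
    {A B X Y Z : C} (i : A ⟶ B) (p : Y ⟶ X) (f : X ⟶ Z) [HasLiftingProperty i (p ≫ f)]
    (h : ∀ t : A ⟶ X, ∃ w, w ≫ p = t) : HasLiftingProperty i f where
  sq_hasLift {t b} sq := by
    obtain ⟨w, rfl⟩ := h t
    have sq' : CommSq w i (p ≫ f) b := ⟨by rw [← Category.assoc, sq.w]⟩
    exact ⟨⟨{ l := sq'.lift ≫ p
              fac_left := by rw [← Category.assoc, sq'.fac_left] }⟩⟩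

lemma fibration_of_kanFibration {X Y : SSet.{u}} {f : X ⟶ Y} (hf : KanFibration f) :
    Fibration f := by
  rw [fibration_iff]
  intro _ _ _ h
  simp only [J, MorphismProperty.iSup_iff] at h
  obtain ⟨n, ⟨i⟩⟩ := h
  exact hf (Nat.le_add_left 1 n) i

namespace SSet

lemma horn_one_ι (i : Fin 2) : Λ[1, i].ι = const (stdSimplex.obj₀Equiv.{u}.symm i) := by
  ext m ⟨t, ht⟩
  induction m using Opposite.rec with | op m => ?_
  induction m using SimplexCategory.rec with | _ d => ?_
  refine stdSimplex.ext _ _ fun x => ?_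
  obtain ⟨j, hji, hj⟩ := (mem_horn_iff_notMem_range t i).1 ht
  change t x = i
  have : t x ≠ j := fun h => hj ⟨x, h⟩
  omega

section HomotopyLifting

variable {A E B : SSet.{u}} (p : E ⟶ B) [Fibration p] (H : A ⊗ Δ[1] ⟶ B)

lemma exists_lift_ι₁_comp (h₀ : ∃ f, f ≫ p = ι₀ ≫ H) : ∃ g, g ≫ p = ι₁ ≫ H := by
  obtain ⟨f, hf⟩ := h₀
  have hι : A ◁ Λ[1, 0].ι = fst A _ ≫ ι₀ := by
    ext : 1 <;> simp [horn_one_ι]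
  have sq : CommSq (fst _ _ ≫ f) (A ◁ Λ[1, 0].ι) p H :=
    ⟨by rw [hι, Category.assoc, Category.assoc, hf]⟩
  have := anodyneExtensions.whiskerLeft (.horn_ι (n := 1) 0) A p (mem_fibrations p)
  exact ⟨ι₁ ≫ sq.lift, by simp⟩

lemma exists_lift_ι₀_comp (h₁ : ∃ g, g ≫ p = ι₁ ≫ H) : ∃ f, f ≫ p = ι₀ ≫ H := by
  obtain ⟨g, hg⟩ := h₁
  have hι : A ◁ Λ[1, 1].ι = fst A _ ≫ ι₁ := by
    ext : 1 <;> simp [horn_one_ι]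
  have sq : CommSq (fst _ _ ≫ g) (A ◁ Λ[1, 1].ι) p H :=
    ⟨by rw [hι, Category.assoc, Category.assoc, hg]⟩
  have := anodyneExtensions.whiskerLeft (.horn_ι (n := 1) 1) A p (mem_fibrations p)
  exact ⟨ι₀ ≫ sq.lift, by simp⟩

end HomotopyLifting

namespace stdSimplex

variable {m n : ℕ} {φ ψ : Fin (m + 1) →o Fin (n + 1)}

def homotopyOfLE (h : φ ≤ ψ) : Δ[m] ⊗ Δ[1] ⟶ Δ[n] where
  app d := TypeCat.ofHom fun z => objMk
    ⟨fun x => if asOrderHom z.2 x = 0 then φ (asOrderHom z.1 x) else ψ (asOrderHom z.1 x), by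
      intro x y hxy
      have h₁ := (asOrderHom z.1).monotone hxy
      have h₂ := (asOrderHom z.2).monotone hxy
      dsimp only
      split_ifs with hx hy hy
      · exact φ.monotone h₁
      · exact (φ.monotone h₁).trans (h _)
      · exact absurd (le_antisymm (hy ▸ h₂) (Fin.zero_le _)) hx
      · exact ψ.monotone h₁⟩
  naturality _ _ _ := rfl

end stdSimplex

namespace horn

lemma obj₀Equiv_symm_mem {n : ℕ} (k : Fin (n + 2)) :
    stdSimplex.obj₀Equiv.{u}.symm k ∈ Λ[n + 1, k].obj (op ⦋0⦌) := by
  obtain ⟨j, hj⟩ := exists_ne k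
  exact (mem_horn_iff_notMem_range _ _).2 ⟨j, hj, fun ⟨_, e⟩ => hj e.symm⟩

variable {n : ℕ} {k : Fin (n + 1)} {φ ψ : Fin (n + 1) →o Fin (n + 1)}

lemma mem_of_apply_eq_or_eq {d : SimplexCategoryᵒᵖ} {a b : Δ[n].obj d} (ha : a ∈ Λ[n, k].obj d)
    (h : ∀ x, stdSimplex.asOrderHom b x = stdSimplex.asOrderHom a x ∨
      stdSimplex.asOrderHom b x = k) : b ∈ Λ[n, k].obj d := by
  obtain ⟨j, hj⟩ := Set.ne_univ_iff_exists_notMem _ |>.1 ha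
  refine Set.ne_univ_iff_exists_notMem _ |>.2 ⟨j, ?_⟩
  simp only [Set.mem_union, Set.mem_range, Set.mem_singleton_iff, not_or, not_exists] at hj ⊢
  refine ⟨fun x hx => ?_, hj.2⟩
  rcases h x with e | e <;> rw [e] at hx
  exacts [hj.1 x hx, hj.2 hx.symm]

def homOfOrderHom (φ : Fin (n + 1) →o Fin (n + 1)) (hφ : ∀ i, φ i = i ∨ φ i = k) :
    (Λ[n, k] : SSet.{u}) ⟶ Λ[n, k] :=
  Subcomplex.lift (Λ[n, k].ι ≫ SSet.stdSimplex.map (.mk φ)) <| by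
    rintro d _ ⟨a, rfl⟩
    exact mem_of_apply_eq_or_eq a.2 fun x => hφ _

lemma homOfOrderHom_id : homOfOrderHom (k := k) OrderHom.id (fun _ => Or.inl rfl) = 𝟙 _ := by
  rw [← cancel_mono Λ[n, k].ι]
  simp [homOfOrderHom]

lemma homOfOrderHom_const {n : ℕ} (k : Fin (n + 2)) :
    homOfOrderHom (OrderHom.const _ k) (fun _ => Or.inr rfl) =
      SSet.const (⟨_, obj₀Equiv_symm_mem.{u} k⟩ : (Λ[n + 1, k] : SSet.{u}) _⦋0⦌) :=
  rfl

def homotopyOfLE (h : φ ≤ ψ) (hφ : ∀ i, φ i = i ∨ φ i = k) (hψ : ∀ i, ψ i = i ∨ ψ i = k) :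
    (Λ[n, k] : SSet.{u}) ⊗ Δ[1] ⟶ Λ[n, k] :=
  Subcomplex.lift (Λ[n, k].ι ▷ Δ[1] ≫ stdSimplex.homotopyOfLE h) <| by
    rintro d _ ⟨⟨a, t⟩, rfl⟩
    refine mem_of_apply_eq_or_eq a.2 fun x => ?_
    change (if _ then φ _ else ψ _) = _ ∨ (if _ then φ _ else ψ _) = _
    split_ifs
    exacts [hφ _, hψ _]

section Homotopy

variable (h : φ ≤ ψ) (hφ : ∀ i, φ i = i ∨ φ i = k) (hψ : ∀ i, ψ i = i ∨ ψ i = k)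

lemma ι₀_homotopyOfLE : ι₀ ≫ homotopyOfLE h hφ hψ = homOfOrderHom φ hφ := rfl

lemma ι₁_homotopyOfLE : ι₁ ≫ homotopyOfLE h hφ hψ = homOfOrderHom ψ hψ := rfl

variable {E B : SSet.{u}} (p : E ⟶ B) [Fibration p] (u : (Λ[n, k] : SSet.{u}) ⟶ B)

include h in
lemma exists_lift_homOfOrderHom_of_le (hlift : ∃ f, f ≫ p = homOfOrderHom φ hφ ≫ u) :
    ∃ g, g ≫ p = homOfOrderHom ψ hψ ≫ u := by
  rw [← ι₁_homotopyOfLE h hφ hψ, Category.assoc]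
  apply exists_lift_ι₁_comp
  rwa [← Category.assoc, ι₀_homotopyOfLE]

include h in
lemma exists_lift_homOfOrderHom_of_ge (hlift : ∃ g, g ≫ p = homOfOrderHom ψ hψ ≫ u) :
    ∃ f, f ≫ p = homOfOrderHom φ hφ ≫ u := by
  rw [← ι₀_homotopyOfLE h hφ hψ, Category.assoc]
  apply exists_lift_ι₀_comp
  rwa [← Category.assoc, ι₁_homotopyOfLE]

end Homotopy

lemma exists_lift_of_surjective {E B : SSet.{u}} (p : E ⟶ B) [Fibration p]
    (hp : Function.Surjective (p.app (op ⦋0⦌))) {n : ℕ} (k : Fin (n + 2))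
    (u : (Λ[n + 1, k] : SSet.{u}) ⟶ B) : ∃ w, w ≫ p = u := by
  let maxK : Fin (n + 2) →o Fin (n + 2) := ⟨fun i => max i k, fun _ _ h => max_le_max_right k h⟩
  have hmaxK : ∀ i, maxK i = i ∨ maxK i = k := fun i => max_choice i k
  obtain ⟨y, hy⟩ := hp (u.app _ ⟨_, obj₀Equiv_symm_mem k⟩)
  have hconst : ∃ f, f ≫ p = homOfOrderHom (OrderHom.const _ k) (fun _ => Or.inr rfl) ≫ u :=
    ⟨SSet.const y, by rw [homOfOrderHom_const, const_comp, hy]; exact (const_comp _ u).symm⟩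
  have hmax := exists_lift_homOfOrderHom_of_le (fun i => le_max_right i k) _ hmaxK p u hconst
  obtain ⟨w, hw⟩ := exists_lift_homOfOrderHom_of_ge (φ := OrderHom.id)
    (fun i => le_max_left i k) _ hmaxK p u hmax
  rw [homOfOrderHom_id, Category.id_comp] at hw
  exact ⟨w, hw⟩

end horn

end SSet

/-- If `p` is an epimorphism, `p` and `g = f ∘ p` are Kan fibrations, then `f` is a Kan
fibration. -/
theorem kanFibration_of_epi_comp {Y X A : SSet} (p : Y ⟶ X) (f : X ⟶ A) (g : Y ⟶ A)
    (hcomp : p ≫ f = g) (hp_epi : Epi p) (hp : KanFibration p) (hg : KanFibration g) :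
    KanFibration f := by
  subst hcomp
  have := fibration_of_kanFibration hp
  have hp₀ : Function.Surjective (p.app (op ⦋0⦌)) := (epi_iff_surjective _).1 inferInstance
  intro n hn k
  obtain ⟨n, rfl⟩ := Nat.exists_eq_add_of_le' hn
  have := hg hn k
  exact .of_comp_of_forall_exists_lift _ p f (SSet.horn.exists_lift_of_surjective p hp₀ k)
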